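/- arXiv:2110.00285 — 2 statements merged into one kernel-verified Lean document; each statement's English description precedes it below -/
import Mathlib

section
/- For every matrix A ∈ ℝ_max^{n×n} and every λ ∈ ℝ_max, the set W(A,λ) is a max-plus subspace of ℝ_max^n, i.e., it contains ℰ and is closed under ⊕ and scalar multiplication ⊗. -/
open Filter

noncomputable section

/-- The max-plus semiring ℝ_max = ℝ ∪ {ε}, with ε = ⊥ = −∞,
`a ⊕ b = max a b` and `a ⊗ b = a + b` (the `Add` of `WithBot ℝ`). -/
abbrev RMax : Type := WithBot ℝ

/-- Max-plus vectors. -/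
abbrev Vec (ι : Type) : Type := ι → RMax

/-- The max-plus zero vector ℰ. -/
def zeroV (ι : Type) : Vec ι := fun _ => (⊥ : RMax)

/-- Max-plus "negation" (inversion for ⊗), fixing ⊥. -/
def mpNeg (a : RMax) : RMax := WithBot.map (fun r : ℝ => -r) a

section Defs

variable {ι κ₁ κ₂ κ₃ : Type}

/-- Matrix (or vector) sum `M ⊕ N`, entrywise max. -/
def mpAddM (M N : Matrix κ₁ κ₂ RMax) : Matrix κ₁ κ₂ RMax := fun i j => max (M i j) (N i j)

/-- Scalar multiplication `l ⊗ M` of a matrix. -/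
def smulM (l : RMax) (M : Matrix κ₁ κ₂ RMax) : Matrix κ₁ κ₂ RMax := fun i j => l + M i j

/-- Scalar multiplication `l ⊗ x` of a vector. -/
def smulV (l : RMax) (x : Vec ι) : Vec ι := fun i => l + x i

/-- Max-plus matrix product `M ⊗ N`. -/
def mpMul [Fintype κ₂] (M : Matrix κ₁ κ₂ RMax) (N : Matrix κ₂ κ₃ RMax) : Matrix κ₁ κ₃ RMax :=
  fun i j => Finset.univ.sup fun k => M i k + N k j

/-- Max-plus matrix-vector product `M ⊗ x`. -/
def mpMulVec [Fintype κ₂] (M : Matrix κ₁ κ₂ RMax) (x : Vec κ₂) : Vec κ₁ :=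
  fun i => Finset.univ.sup fun j => M i j + x j

/-- The max-plus identity matrix `E_n` (0 on the diagonal, ε elsewhere). -/
def mpId [DecidableEq ι] : Matrix ι ι RMax := fun i j => if i = j then (0 : RMax) else ⊥

/-- Max-plus inverse of a generalized permutation matrix:
the transpose with the finite entries negated. -/
def genInv (P : Matrix ι ι RMax) : Matrix ι ι RMax := fun i j => mpNeg (P j i)

/-- The max-plus determinant `det A = ⊕_π ⊗_i a_{i π(i)}`. -/
def mpDet [Fintype ι] [DecidableEq ι] (A : Matrix ι ι RMax) : RMax :=
  Finset.univ.sup fun π : Equiv.Perm ι => ∑ i, A i (π i)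

/-- Max-plus matrix powers. -/
def mpPow [Fintype ι] [DecidableEq ι] (P : Matrix ι ι RMax) : ℕ → Matrix ι ι RMax
  | 0 => mpId
  | k + 1 => mpMul P (mpPow P k)

/-- The Kleene star `P* = E ⊕ P ⊕ P^{⊗2} ⊕ ⋯ ⊕ P^{⊗(n−1)}`. -/
def mpStar [Fintype ι] [DecidableEq ι] (P : Matrix ι ι RMax) : Matrix ι ι RMax :=
  fun i j => (Finset.range (Fintype.card ι)).sup fun k => mpPow P k i j

/-- A multi-circuit on the vertex set `ι`: a union of vertex-disjoint elementary circuits,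
encoded by its vertex set `verts` together with the successor permutation `perm`,
which is the identity outside `verts`.  Its edge set is `{(i, perm i) | i ∈ verts}`
and its length is `verts.card`. -/
structure MultiCircuit (ι : Type) where
  verts : Finset ι
  perm : Equiv.Perm ι
  fixes : ∀ i, i ∉ verts → perm i = i

/-- The weight `w(C)` of a multi-circuit with respect to the matrix `A`. -/
def mcWeight (A : Matrix ι ι RMax) (C : MultiCircuit ι) : RMax :=
  ∑ i ∈ C.verts, A i (C.perm i)

/-- The multi-circuit `C` lies in the graph `G(A)` (all its edges have weight ≠ ε). -/
def InGraph (A : Matrix ι ι RMax) (C : MultiCircuit ι) : Prop :=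
  ∀ i ∈ C.verts, A i (C.perm i) ≠ ⊥

/-- A multi-circuit consisting of a single (elementary) circuit. -/
def IsCircuit (C : MultiCircuit ι) : Prop :=
  C.verts.Nonempty ∧ ∀ i ∈ C.verts, ∀ j ∈ C.verts, C.perm.SameCycle i j

/-- `D` is a critical circuit of `G(A)`: an elementary circuit of `G(A)` whose average
weight is maximal among all elementary circuits of `G(A)`
(averages `w/ℓ` are compared without division via `ℓ' • w ≥ ℓ • w'`). -/
def IsCritical (A : Matrix ι ι RMax) (D : MultiCircuit ι) : Prop :=
  IsCircuit D ∧ InGraph A D ∧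
    ∀ D' : MultiCircuit ι, IsCircuit D' → InGraph A D' →
      D.verts.card • mcWeight A D' ≤ D'.verts.card • mcWeight A D

/-- `ρ` is the maximum average weight of the (elementary) circuits of `G(A)`,
taken to be ε if `G(A)` has no circuit. -/
def IsMaxCycleMean (A : Matrix ι ι RMax) (ρ : RMax) : Prop :=
  (∀ D : MultiCircuit ι, IsCircuit D → InGraph A D → mcWeight A D ≤ D.verts.card • ρ) ∧
    ((∃ D : MultiCircuit ι, IsCircuit D ∧ InGraph A D ∧ mcWeight A D = D.verts.card • ρ) ∨
      (ρ = ⊥ ∧ ∀ D : MultiCircuit ι, IsCircuit D → ¬InGraph A D))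

/-- `l` is a (geometric) eigenvalue of `A`: `A ⊗ x = l ⊗ x` for some `x ≠ ℰ`. -/
def IsEigen [Fintype ι] (A : Matrix ι ι RMax) (l : RMax) : Prop :=
  ∃ x : Vec ι, x ≠ zeroV ι ∧ mpMulVec A x = smulV l x

variable [Fintype ι] [DecidableEq ι]

/-- The value `w(C) ⊗ l^{⊗(n − ℓ(C))}` of the term of `χ_A(l)` corresponding to the
multi-circuit `C`. -/
def ValAt (A : Matrix ι ι RMax) (C : MultiCircuit ι) (l : RMax) : RMax :=
  mcWeight A C + (Fintype.card ι - C.verts.card) • l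

/-- `C` is `μ`-maximal (for a real `μ`): it attains
`χ_A(μ) = max_C (w(C) + (n − ℓ(C))·μ)`. -/
def MaximalAt (A : Matrix ι ι RMax) (C : MultiCircuit ι) (μ : ℝ) : Prop :=
  ∀ C' : MultiCircuit ι, ValAt A C' (μ : RMax) ≤ ValAt A C (μ : RMax)

/-- `C` is `l`-maximal, for `l ∈ ℝ_max`; for `l = ε` this means `μ`-maximal for all
sufficiently small real `μ`. -/
def IsLamMax (A : Matrix ι ι RMax) (C : MultiCircuit ι) (l : RMax) : Prop :=
  (∀ μ : ℝ, l = (μ : RMax) → MaximalAt A C μ) ∧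
    (l = ⊥ → ∃ μ₀ : ℝ, ∀ μ : ℝ, μ ≤ μ₀ → MaximalAt A C μ)

/-- `l` is an algebraic eigenvalue of `A`, i.e. a root of the characteristic polynomial
`χ_A(t)`: a real `l` is a root iff there are two `l`-maximal multi-circuits of different
lengths, and `ε` is a root iff `G(A)` contains no multi-circuit of length `n`. -/
def IsAlgEigen (A : Matrix ι ι RMax) (l : RMax) : Prop :=
  (l ≠ ⊥ ∧ ∃ C C' : MultiCircuit ι, IsLamMax A C l ∧ IsLamMax A C' l ∧
      C.verts.card ≠ C'.verts.card) ∨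
    (l = ⊥ ∧ ∀ C : MultiCircuit ι, C.verts.card = Fintype.card ι → ¬InGraph A C)

open Classical in
/-- The multiplicity of `l` as a root of the characteristic polynomial `χ_A(t)`:
for a real `l` it is the difference between the maximal and the minimal length of an
`l`-maximal multi-circuit; for `l = ε` it is `n` minus the maximal length of a
multi-circuit of `G(A)`.  It is `0` when `l` is not a root. -/
noncomputable def rootMult (A : Matrix ι ι RMax) (l : RMax) : ℕ :=
  if l = ⊥ then
    Fintype.card ι - sSup {m : ℕ | ∃ C : MultiCircuit ι, InGraph A C ∧ C.verts.card = m}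
  else
    sSup {m : ℕ | ∃ C : MultiCircuit ι, IsLamMax A C l ∧ C.verts.card = m} -
      sInf {m : ℕ | ∃ C : MultiCircuit ι, IsLamMax A C l ∧ C.verts.card = m}

/-- The matrix `A_C`. -/
def matC (A : Matrix ι ι RMax) (C : MultiCircuit ι) : Matrix ι ι RMax :=
  fun i j => if i ∈ C.verts ∧ j = C.perm i then A i j else ⊥

/-- The matrix `A_{∖C}`. -/
def matNotC (A : Matrix ι ι RMax) (C : MultiCircuit ι) : Matrix ι ι RMax :=
  fun i j => if i ∈ C.verts ∧ j = C.perm i then ⊥ else A i j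

/-- The diagonal matrix `E_C`. -/
def eC (C : MultiCircuit ι) : Matrix ι ι RMax :=
  fun i j => if i = j ∧ i ∈ C.verts then (0 : RMax) else ⊥

/-- The diagonal matrix `E_{∖C}`. -/
def eNotC (C : MultiCircuit ι) : Matrix ι ι RMax :=
  fun i j => if i = j ∧ i ∉ C.verts then (0 : RMax) else ⊥

/-- `W(A,l,C) = {x : (A_{∖C} ⊕ l ⊗ E_C) ⊗ x = (A_C ⊕ l ⊗ E_{∖C}) ⊗ x}`. -/
def WAC (A : Matrix ι ι RMax) (l : RMax) (C : MultiCircuit ι) : Set (Vec ι) :=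
  {x | mpMulVec (mpAddM (matNotC A C) (smulM l (eC C))) x =
       mpMulVec (mpAddM (matC A C) (smulM l (eNotC C))) x}

/-- `B_{A,l,C} = (A_C ⊕ l ⊗ E_{∖C})^{−1} ⊗ (A_{∖C} ⊕ l ⊗ E_C)`. -/
def Bmat (A : Matrix ι ι RMax) (l : RMax) (C : MultiCircuit ι) : Matrix ι ι RMax :=
  mpMul (genInv (mpAddM (matC A C) (smulM l (eNotC C)))) (mpAddM (matNotC A C) (smulM l (eC C)))

/-- Assumption (★): for each `l ∈ ℝ_max`, any two distinct `l`-maximal multi-circuits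
of `G(A)` have different lengths. -/
def StarAssumption (A : Matrix ι ι RMax) : Prop :=
  ∀ l : RMax, ∀ C C' : MultiCircuit ι, IsLamMax A C l → IsLamMax A C' l →
    C.verts.card = C'.verts.card → C = C'

/-- The perturbed matrix `A(ζ;δ)` with entries `a_{ij} − ζ_{ij}·δ` (ε stays ε). -/
def perturb (A : Matrix ι ι RMax) (ζ : Matrix ι ι ℝ) (δ : ℝ) : Matrix ι ι RMax :=
  fun i j => A i j + ((-(ζ i j * δ) : ℝ) : RMax)

/-- The set `Z` of perturbation directions `ζ ∈ [0,1]^{n×n}` for which `A(ζ;δ)`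
satisfies (★) for all sufficiently small `δ > 0`. -/
def Zset (A : Matrix ι ι RMax) : Set (Matrix ι ι ℝ) :=
  {ζ | (∀ i j, ζ i j ∈ Set.Icc (0 : ℝ) 1) ∧
    ∃ δ' : ℝ, 0 < δ' ∧ ∀ δ : ℝ, 0 < δ → δ < δ' → StarAssumption (perturb A ζ δ)}

/-- The interval `B(l, r) = [l − r, l + r] ⊆ ℝ_max` (and `B(ε, r) = {ε}`). -/
def mpBall (l : RMax) (r : ℝ) : Set RMax :=
  {l' | (l = ⊥ ∧ l' = ⊥) ∨ ∃ x y : ℝ, l = (x : RMax) ∧ l' = (y : RMax) ∧ |y - x| ≤ r}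

/-- Convergence in `ℝ_max` as `δ → +0`. -/
def RMaxTendsto (f : ℝ → RMax) (a : RMax) : Prop :=
  (a = ⊥ → ∀ M : ℝ, ∀ᶠ δ in nhdsWithin 0 (Set.Ioi (0 : ℝ)), f δ < (M : RMax)) ∧
    (∀ x : ℝ, a = (x : RMax) → ∀ ε : ℝ, 0 < ε →
      ∀ᶠ δ in nhdsWithin 0 (Set.Ioi (0 : ℝ)), ∃ y : ℝ, f δ = (y : RMax) ∧ |y - x| < ε)

/-- The (max-plus) sum `⊕_k U_k` of a family of subsets of `ℝ_max^n`. -/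
def setSum {κ : Type} (U : κ → Set (Vec ι)) : Set (Vec ι) :=
  {x | ∃ s : Finset κ, ∃ f : κ → Vec ι, (∀ k ∈ s, f k ∈ U k) ∧
    x = fun i => s.sup fun k => f k i}

/-- The limit `lim_{δ→+0} S(δ)` of a parametrized family of subsets of `ℝ_max^n`. -/
def setLim (S : ℝ → Set (Vec ι)) : Set (Vec ι) :=
  {x | ∃ g : ℝ → Vec ι, (∀ δ : ℝ, 0 < δ → g δ ∈ S δ) ∧
    ∀ i : ι, RMaxTendsto (fun δ => g δ i) (x i)}

/-- The sum `⊕_{l' ∈ S} W(A', l', C_{l'})`, where `C_{l'}` is an `l'`-maximal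
multi-circuit of `G(A')`. -/
def perturbSum (A' : Matrix ι ι RMax) (S : Set RMax) : Set (Vec ι) :=
  setSum fun l : S =>
    {x | ∃ C : MultiCircuit ι, IsLamMax A' C (l : RMax) ∧ x ∈ WAC A' (l : RMax) C}

/-- The algebraic eigenspace
`W(A,l) = ⋂_{ζ∈Z} lim_{δ→+0} ⊕_{l' ∈ B(l,nδ)} W(A(ζ;δ), l', C_{l'}(ζ;δ))`. -/
def algEigenspace (A : Matrix ι ι RMax) (l : RMax) : Set (Vec ι) :=
  ⋂ ζ ∈ Zset A, setLim fun δ => perturbSum (perturb A ζ δ) (mpBall l (Fintype.card ι * δ))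

/-- The max-plus span of a set of vectors: all finite max-plus linear combinations. -/
def mpSpan (S : Set (Vec ι)) : Set (Vec ι) :=
  {x | ∃ s : Finset (Vec ι), ↑s ⊆ S ∧ ∃ c : Vec ι → RMax,
    x = fun i => s.sup fun v => c v + v i}

/-- `B` is a basis of `U`: a minimal spanning set. -/
def IsBasis (B U : Set (Vec ι)) : Prop :=
  mpSpan B = U ∧ ∀ B' : Set (Vec ι), B' ⊆ B → mpSpan B' = U → B' = B

/-- Tropical orthogonality: the maximum in `ᵗx ⊗ y = ⊕_i x_i ⊗ y_i` is attained
at least twice (a maximum equal to ε counting as attained by all indices). -/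
def Orthogonal (x y : Vec ι) : Prop :=
  (Finset.univ.sup fun i => x i + y i) = ⊥ ∨
    ∃ i j : ι, i ≠ j ∧ x i + y i = (Finset.univ.sup fun k => x k + y k) ∧
      x j + y j = (Finset.univ.sup fun k => x k + y k)

/-- The tropical kernel of a matrix: vectors for which, in every row, the maximum is
attained at least twice (a maximum equal to ε counting as attained by all indices). -/
def tropKernel {κ : Type} (A : Matrix κ ι RMax) : Set (Vec ι) :=
  {x | ∀ i : κ, (Finset.univ.sup fun j => A i j + x j) = ⊥ ∨
    ∃ j k : ι, j ≠ k ∧ A i j + x j = (Finset.univ.sup fun j' => A i j' + x j') ∧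
      A i k + x k = (Finset.univ.sup fun j' => A i j' + x j')}

/-- `A` is (tropically) nonsingular: the maximum in `det A` is attained by exactly
one permutation. -/
def Nonsingular (A : Matrix ι ι RMax) : Prop :=
  ∃! π : Equiv.Perm ι, (∑ i, A i (π i)) = mpDet A

/-- The minor `A^{(r,c)}`, deleting row `r` and column `c`. -/
def mpMinor {n : ℕ} (A : Matrix (Fin (n + 1)) (Fin (n + 1)) RMax) (r c : Fin (n + 1)) :
    Matrix (Fin n) (Fin n) RMax :=
  fun i j => A (r.succAbove i) (c.succAbove j)

/-- The max-plus adjugate, `adj(A)_{ij} = det A^{(j,i)}`. -/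
def mpAdj {n : ℕ} (A : Matrix (Fin (n + 1)) (Fin (n + 1)) RMax) :
    Matrix (Fin (n + 1)) (Fin (n + 1)) RMax :=
  fun i j => mpDet (mpMinor A j i)

/-- The submatrix `[A_C]_{KK}` with `K = V(C)`. -/
def subPC (A : Matrix ι ι RMax) (C : MultiCircuit ι) :
    Matrix {k // k ∈ C.verts} {k // k ∈ C.verts} RMax :=
  fun i j => matC A C i.1 j.1

/-- The submatrix `[A_{∖C}]_{KK}` with `K = V(C)`. -/
def subPNC (A : Matrix ι ι RMax) (C : MultiCircuit ι) :
    Matrix {k // k ∈ C.verts} {k // k ∈ C.verts} RMax :=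
  fun i j => matNotC A C i.1 j.1

/-- The matrix `M = [A_C]_{KK}^{−1} ⊗ [A_{∖C}]_{KK}`. -/
def xiM (A : Matrix ι ι RMax) (C : MultiCircuit ι) :
    Matrix {k // k ∈ C.verts} {k // k ∈ C.verts} RMax :=
  mpMul (genInv (subPC A C)) (subPNC A C)

/-- `M* ⊗ ([A_C]_{KK}^{−1} ⊗ [A]_{KL}) ⊗ [x]_L`, the `K`-part of `ξ_{A,C}(x)`. -/
def xiVec (A : Matrix ι ι RMax) (C : MultiCircuit ι) (x : Vec ι) : Vec {k // k ∈ C.verts} :=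
  mpMulVec (mpStar (xiM A C)) (mpMulVec (genInv (subPC A C))
    (fun k : {k // k ∈ C.verts} =>
      (Finset.univ.filter fun j : ι => j ∉ C.verts).sup fun j => A k.1 j + x j))

/-- The linear map `ξ_{A,C} : ℝ_max^n → ℝ_max^n`. -/
def xi (A : Matrix ι ι RMax) (C : MultiCircuit ι) (x : Vec ι) : Vec ι :=
  fun i => if h : i ∈ C.verts then xiVec A C x ⟨i, h⟩ else x i

end Defs

end

/-!
Each `W(A', λ', C)` is the solution set of a two-sided max-plus linear system, so it is closed
under `⊕` and scalar `⊗`; finite sums of such sets and entrywise limits as `δ → +0` inherit this.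
The one subtle point is that the summand of `⊕_{λ'}` is the union of the `W(A', λ', C)` over all
`λ'`-maximal `C`, so this set has to be shown independent of `C`.

For real `λ'` this is an exchange argument. `x ∈ W(A', λ', C)` says that in every row of
`(A' ⊕ λ' ⊗ E) ⊗ x` the maximum is attained both by the term picked by `C` and by another one.
If the term picked by a `λ'`-maximal `C'` fell short of the maximum in some row `i`, then along
the orbit of `i` under `C.perm⁻¹ * C'.perm` the edges of `C` would be strictly heavier than
those of `C'`, and replacing `C'` by `C` on that orbit would beat `C'`. For `λ' = ε` all
`ε`-maximal multi-circuits have the same length, so by (★) there is only one.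
-/

open Finset Topology

lemma Equiv.Perm.SameCycle.of_apply_imp {ι : Type*} [Finite ι] {γ : Equiv.Perm ι}
    {P : ι → Prop} (hP : ∀ j, P (γ j) → P j) {i j : ι} (hi : P i) (h : γ.SameCycle i j) : P j := by
  have key : ∀ k : ℕ, ∀ j, (γ ^ k) j = i → P j := by
    intro k
    induction k with
    | zero => rintro j rfl; exact hi
    | succ k ih => exact fun j hj => hP j (ih (γ j) (by rwa [pow_succ, Equiv.Perm.mul_apply] at hj))
  obtain ⟨k, -, hk⟩ := h.symm.exists_pow_eq'
  exact key k j hk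

lemma Equiv.Perm.sum_comp_sameCycle {ι M : Type*} [Fintype ι] [DecidableEq ι] [AddCommMonoid M]
    (γ : Equiv.Perm ι) (i : ι) (f : ι → M) :
    ∑ j ∈ univ.filter (γ.SameCycle i), f (γ j) = ∑ j ∈ univ.filter (γ.SameCycle i), f j := by
  rw [← Equiv.Perm.sum_comp (γ.cycleOf i) _ f]
  · exact sum_congr rfl fun j hj => by rw [(mem_filter.1 hj).2.cycleOf_apply]
  · intro j hj
    by_contra hnot
    exact hj (Equiv.Perm.cycleOf_apply_of_not_sameCycle (by simpa using hnot))

lemma Equiv.Perm.mul_cycleOf_inv_apply {ι : Type*} [Fintype ι] [DecidableEq ι]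
    (σ τ : Equiv.Perm ι) (i j : ι) :
    (τ * ((σ⁻¹ * τ).cycleOf i)⁻¹) j = if (σ⁻¹ * τ).SameCycle i j then σ j else τ j := by
  simp only [Equiv.Perm.mul_apply, Equiv.Perm.cycleOf_inv, Equiv.Perm.cycleOf_apply,
    Equiv.Perm.sameCycle_inv]
  split_ifs <;> simp

lemma WithBot.sum_lt_sum_of_ne_bot {ι α : Type*} [AddCommMonoid α] [LinearOrder α]
    [IsOrderedCancelAddMonoid α] {s : Finset ι} {f g : ι → WithBot α} (hf : ∀ i ∈ s, f i ≠ ⊥)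
    (hle : ∀ i ∈ s, f i ≤ g i) (hlt : ∃ i ∈ s, f i < g i) : ∑ i ∈ s, f i < ∑ i ∈ s, g i := by
  classical
  obtain ⟨i, hi, hfg⟩ := hlt
  rw [← add_sum_erase s f hi, ← add_sum_erase s g hi]
  exact WithBot.add_lt_add_of_lt_of_le
    (WithBot.sum_lt_bot fun j hj => hf j (mem_of_mem_erase hj)).ne' hfg
    (sum_le_sum fun j hj => hle j (mem_of_mem_erase hj))

lemma RMax.add_finset_sup {α : Type*} (c : RMax) (s : Finset α) (f : α → RMax) :
    c + s.sup f = s.sup fun j => c + f j :=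
  apply_sup_eq_sup_comp (c + ·) (fun a b => (max_add_add_left c a b).symm) (WithBot.add_bot c)

section LinearSystem

variable {ι κ : Type} [Fintype κ]

lemma mpMulVec_sup (M : Matrix ι κ RMax) (x y : Vec κ) :
    mpMulVec M (x ⊔ y) = mpMulVec M x ⊔ mpMulVec M y := by
  funext i
  simp only [mpMulVec, Pi.sup_apply, ← max_add_add_left]
  exact sup_sup

lemma mpMulVec_smulV (M : Matrix ι κ RMax) (c : RMax) (x : Vec κ) :
    mpMulVec M (smulV c x) = smulV c (mpMulVec M x) := by
  funext i
  simp only [mpMulVec, smulV, RMax.add_finset_sup, add_left_comm]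

lemma mpMulVec_mpAddM_apply (M N : Matrix ι κ RMax) (x : Vec κ) (i : ι) :
    mpMulVec (mpAddM M N) x i = mpMulVec M x i ⊔ mpMulVec N x i := by
  simp only [mpMulVec, mpAddM, ← max_add_add_right]
  exact sup_sup

variable [Fintype ι] [DecidableEq ι] {A : Matrix ι ι RMax} {l : RMax} {C : MultiCircuit ι}

lemma sup_mem_WAC {x y : Vec ι} (hx : x ∈ WAC A l C) (hy : y ∈ WAC A l C) :
    x ⊔ y ∈ WAC A l C := by
  simp only [WAC, Set.mem_ofPred_eq, mpMulVec_sup] at hx hy ⊢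
  rw [hx, hy]

lemma smulV_mem_WAC (c : RMax) {x : Vec ι} (hx : x ∈ WAC A l C) : smulV c x ∈ WAC A l C := by
  simp only [WAC, Set.mem_ofPred_eq, mpMulVec_smulV] at hx ⊢
  rw [hx]

end LinearSystem

section RowTerms

variable {ι : Type} [Fintype ι] [DecidableEq ι]

/- Row `i` of `(A ⊕ l ⊗ E) ⊗ x` is the maximum of the terms `A i j + x j` and of the loop term
`l + x i`. The multi-circuit `C` picks one of them, `succTerm`: its edge out of `i` if `i` is
covered, the loop otherwise; `otherTerms` is the maximum of the remaining ones. -/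

def succWeight (A : Matrix ι ι RMax) (C : MultiCircuit ι) (l : RMax) (i : ι) : RMax :=
  if i ∈ C.verts then A i (C.perm i) else l

def succTerm (A : Matrix ι ι RMax) (C : MultiCircuit ι) (l : RMax) (x : Vec ι) (i : ι) : RMax :=
  succWeight A C l i + x (C.perm i)

def otherTerms (A : Matrix ι ι RMax) (C : MultiCircuit ι) (l : RMax) (x : Vec ι) (i : ι) :
    RMax :=
  (univ.sup fun j => matNotC A C i j + x j) ⊔ (if i ∈ C.verts then l + x i else ⊥)

def rowSup (A : Matrix ι ι RMax) (l : RMax) (x : Vec ι) (i : ι) : RMax :=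
  (univ.sup fun j => A i j + x j) ⊔ (l + x i)

variable {A : Matrix ι ι RMax} {l : RMax} {C C' : MultiCircuit ι} {x : Vec ι} {i : ι}

lemma mpMulVec_matC_apply :
    mpMulVec (matC A C) x i = if i ∈ C.verts then A i (C.perm i) + x (C.perm i) else ⊥ := by
  by_cases hi : i ∈ C.verts <;> simp [hi, mpMulVec, matC, ite_add, sup_ite, Finset.filter_eq']

lemma mpMulVec_smulM_eC_apply :
    mpMulVec (smulM l (eC C)) x i = if i ∈ C.verts then l + x i else ⊥ := by
  by_cases hi : i ∈ C.verts <;>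
    simp [hi, mpMulVec, smulM, eC, ite_add, add_ite, sup_ite, Finset.filter_eq]

lemma mpMulVec_smulM_eNotC_apply :
    mpMulVec (smulM l (eNotC C)) x i = if i ∈ C.verts then ⊥ else l + x i := by
  by_cases hi : i ∈ C.verts <;>
    simp [hi, mpMulVec, smulM, eNotC, ite_add, add_ite, sup_ite, Finset.filter_eq]

lemma mem_WAC_iff : x ∈ WAC A l C ↔ ∀ i, otherTerms A C l x i = succTerm A C l x i := by
  simp only [WAC, Set.mem_ofPred_eq, funext_iff, mpMulVec_mpAddM_apply, mpMulVec_matC_apply,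
    mpMulVec_smulM_eC_apply, mpMulVec_smulM_eNotC_apply]
  refine forall_congr' fun i => ?_
  by_cases hi : i ∈ C.verts
  · simp [hi, otherTerms, succTerm, succWeight, mpMulVec]
  · simp [hi, otherTerms, succTerm, succWeight, mpMulVec, C.fixes i hi]

lemma rowSup_eq_otherTerms_sup_succTerm :
    rowSup A l x i = otherTerms A C l x i ⊔ succTerm A C l x i := by
  have hsplit : ∀ j, A i j + x j = (matNotC A C i j + x j) ⊔ (matC A C i j + x j) := fun j => by
    rw [max_add_add_right]
    congr 1
    by_cases h : i ∈ C.verts ∧ j = C.perm i <;> simp [matNotC, matC, h]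
  have hrow : (univ.sup fun j => A i j + x j) =
      (univ.sup fun j => matNotC A C i j + x j) ⊔ mpMulVec (matC A C) x i := by
    simp only [hsplit]
    exact sup_sup
  rw [rowSup, hrow, mpMulVec_matC_apply]
  by_cases hi : i ∈ C.verts
  · simp only [otherTerms, succTerm, succWeight, if_pos hi]
    exact sup_right_comm _ _ _
  · simp [otherTerms, succTerm, succWeight, hi, C.fixes i hi]

lemma succTerm_le_rowSup : succTerm A C l x i ≤ rowSup A l x i :=
  (rowSup_eq_otherTerms_sup_succTerm (C := C)).symm ▸ le_sup_right

lemma otherTerms_le_rowSup : otherTerms A C l x i ≤ rowSup A l x i :=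
  (rowSup_eq_otherTerms_sup_succTerm (C := C)).symm ▸ le_sup_left

lemma succTerm_eq_rowSup_of_mem_WAC (hx : x ∈ WAC A l C) (i : ι) :
    succTerm A C l x i = rowSup A l x i := by
  rw [rowSup_eq_otherTerms_sup_succTerm (C := C), mem_WAC_iff.1 hx i, sup_idem]

lemma otherTerms_eq_rowSup_of_mem_WAC (hx : x ∈ WAC A l C) (i : ι) :
    otherTerms A C l x i = rowSup A l x i :=
  (mem_WAC_iff.1 hx i).trans (succTerm_eq_rowSup_of_mem_WAC hx i)

lemma otherTerms_congr (h : (i ∈ C.verts ↔ i ∈ C'.verts) ∧ C.perm i = C'.perm i) :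
    otherTerms A C l x i = otherTerms A C' l x i := by
  simp only [otherTerms, matNotC, h.1, h.2]

lemma succTerm_le_otherTerms (h : ¬((i ∈ C.verts ↔ i ∈ C'.verts) ∧ C.perm i = C'.perm i)) :
    succTerm A C l x i ≤ otherTerms A C' l x i := by
  by_cases hC : i ∈ C.verts
  · have hedge : matNotC A C' i (C.perm i) = A i (C.perm i) := by
      simp only [matNotC]
      exact if_neg fun h' => h ⟨iff_of_true hC h'.1, h'.2⟩
    rw [succTerm, succWeight, if_pos hC, ← hedge]
    exact le_sup_of_le_left (le_sup (f := fun j => matNotC A C' i j + x j) (mem_univ _))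
  · have hC' : i ∈ C'.verts := by
      by_contra hC'
      exact h ⟨iff_of_false hC hC', by rw [C.fixes i hC, C'.fixes i hC']⟩
    rw [succTerm, succWeight, if_neg hC, C.fixes i hC]
    exact le_sup_of_le_right (by rw [if_pos hC'])

lemma mem_WAC_of_succTerm_eq_rowSup (hx : x ∈ WAC A l C)
    (h : ∀ i, succTerm A C' l x i = rowSup A l x i) : x ∈ WAC A l C' := by
  refine mem_WAC_iff.2 fun i => ?_
  rw [h i]
  refine le_antisymm otherTerms_le_rowSup ?_
  by_cases hi : (i ∈ C.verts ↔ i ∈ C'.verts) ∧ C.perm i = C'.perm i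
  · rw [← otherTerms_congr hi, otherTerms_eq_rowSup_of_mem_WAC hx]
  · rw [← succTerm_eq_rowSup_of_mem_WAC hx]
    exact succTerm_le_otherTerms hi

end RowTerms

section Exchange

variable {ι : Type} [Fintype ι] {A : Matrix ι ι RMax} {l : RMax} {C C' : MultiCircuit ι}
  {x : Vec ι}

def MultiCircuit.empty : MultiCircuit ι := ⟨∅, 1, fun _ _ => rfl⟩

lemma valAt_empty : ValAt A MultiCircuit.empty l = Fintype.card ι • l := by
  simp [ValAt, mcWeight, MultiCircuit.empty]

lemma MaximalAt.valAt_ne_bot {μ : ℝ} (hC : MaximalAt A C μ) : ValAt A C μ ≠ ⊥ := by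
  refine ne_bot_of_le_ne_bot ?_ (hC MultiCircuit.empty)
  rw [valAt_empty, ← WithBot.coe_nsmul]
  exact WithBot.coe_ne_bot

lemma MaximalAt.exists_valAt_eq {μ₀ : ℝ} (hC : MaximalAt A C μ₀) :
    ∃ w : ℝ, ∀ μ : ℝ, ValAt A C μ = ↑(w + (Fintype.card ι - C.verts.card : ℕ) * μ) := by
  obtain ⟨w, hw⟩ := WithBot.ne_bot_iff_exists.1 (WithBot.add_ne_bot.1 hC.valAt_ne_bot).1
  exact ⟨w, fun μ => by rw [ValAt, ← hw, ← WithBot.coe_nsmul, ← WithBot.coe_add, nsmul_eq_mul]⟩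

variable [DecidableEq ι]

/-- `C` on the orbit of `i₀` under `C.perm⁻¹ * C'.perm`, and `C'` off it. -/
def MultiCircuit.patch (C C' : MultiCircuit ι) (i₀ : ι) : MultiCircuit ι where
  verts := univ.filter fun j =>
    if (C.perm⁻¹ * C'.perm).SameCycle i₀ j then j ∈ C.verts else j ∈ C'.verts
  perm := C'.perm * ((C.perm⁻¹ * C'.perm).cycleOf i₀)⁻¹
  fixes j hj := by
    rw [Equiv.Perm.mul_cycleOf_inv_apply]
    split_ifs at hj ⊢ with h <;> simp_all [MultiCircuit.fixes]

lemma valAt_eq_sum_succWeight : ValAt A C l = ∑ i, succWeight A C l i := by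
  have hon : ∑ i ∈ C.verts, succWeight A C l i = mcWeight A C :=
    sum_congr rfl fun i hi => if_pos hi
  have hoff : ∑ i ∈ C.vertsᶜ, succWeight A C l i = (Fintype.card ι - C.verts.card) • l := by
    rw [sum_congr rfl fun i hi => (show succWeight A C l i = l from if_neg (mem_compl.1 hi)),
      sum_const, card_compl]
  rw [← sum_add_sum_compl C.verts, hon, hoff, ValAt]

lemma succWeight_patch (i₀ j : ι) :
    succWeight A (C.patch C' i₀) l j = if (C.perm⁻¹ * C'.perm).SameCycle i₀ j
      then succWeight A C l j else succWeight A C' l j := by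
  simp only [succWeight, MultiCircuit.patch, Equiv.Perm.mul_cycleOf_inv_apply, mem_filter,
    mem_univ, true_and]
  split_ifs <;> rfl

lemma valAt_patch (i₀ : ι) :
    ValAt A (C.patch C' i₀) l =
      ∑ j ∈ univ.filter ((C.perm⁻¹ * C'.perm).SameCycle i₀), succWeight A C l j +
      ∑ j ∈ univ.filter (¬(C.perm⁻¹ * C'.perm).SameCycle i₀ ·), succWeight A C' l j := by
  simp only [valAt_eq_sum_succWeight, succWeight_patch, sum_ite]

lemma MaximalAt.succWeight_ne_bot {μ : ℝ} (hC : MaximalAt A C μ) (i : ι) :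
    succWeight A C μ i ≠ ⊥ := by
  have h := hC.valAt_ne_bot
  rw [valAt_eq_sum_succWeight, Ne, WithBot.sum_eq_bot_iff, not_exists] at h
  exact fun hi => h i ⟨mem_univ i, hi⟩

lemma sum_succWeight_lt_of_succTerm_lt {μ : ℝ} (hx : x ∈ WAC A μ C) (hC' : MaximalAt A C' μ)
    {i : ι} (hlt : succTerm A C' μ x i < rowSup A μ x i) :
    ∑ j ∈ univ.filter ((C.perm⁻¹ * C'.perm).SameCycle i), succWeight A C' μ j <
      ∑ j ∈ univ.filter ((C.perm⁻¹ * C'.perm).SameCycle i), succWeight A C μ j := by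
  set γ := C.perm⁻¹ * C'.perm
  set O := univ.filter (γ.SameCycle i)
  have hγ : ∀ j, C.perm (γ j) = C'.perm j := fun j => by simp [γ]
  have hle : ∀ j, succWeight A C' μ j + x (C.perm (γ j)) ≤ succWeight A C μ j + x (C.perm j) :=
    fun j => hγ j ▸ succTerm_le_rowSup.trans (succTerm_eq_rowSup_of_mem_WAC hx j).ge
  have hlt' : succTerm A C' μ x i < succTerm A C μ x i :=
    hlt.trans_eq (succTerm_eq_rowSup_of_mem_WAC hx i).symm
  -- finiteness of `x ∘ C.perm` propagates backwards along `γ`, starting from the row `i`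
  have hfin : ∀ j ∈ O, x (C.perm j) ≠ ⊥ := by
    have hback : ∀ j, x (C.perm (γ j)) ≠ ⊥ → x (C.perm j) ≠ ⊥ := fun j hj =>
      (WithBot.add_ne_bot.1 (ne_bot_of_le_ne_bot
        (WithBot.add_ne_bot.2 ⟨hC'.succWeight_ne_bot j, hj⟩) (hle j))).2
    have hi : x (C.perm i) ≠ ⊥ := (WithBot.add_ne_bot.1 (bot_le.trans_lt hlt').ne').2
    exact fun j hj => Equiv.Perm.SameCycle.of_apply_imp (P := fun j => x (C.perm j) ≠ ⊥)
      hback hi (mem_filter.1 hj).2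
  have hγO : ∀ j ∈ O, γ j ∈ O := fun j hj =>
    mem_filter.2 ⟨mem_univ _, Equiv.Perm.sameCycle_apply_right.2 (mem_filter.1 hj).2⟩
  have hsum := WithBot.sum_lt_sum_of_ne_bot
    (fun j hj => WithBot.add_ne_bot.2 ⟨hC'.succWeight_ne_bot j, hfin _ (hγO j hj)⟩)
    (fun j _ => hle j) ⟨i, mem_filter.2 ⟨mem_univ i, .refl _ _⟩, hγ i ▸ hlt'⟩
  rwa [sum_add_distrib, sum_add_distrib, γ.sum_comp_sameCycle i (fun j => x (C.perm j)),
    WithBot.add_lt_add_iff_right (WithBot.sum_lt_bot hfin).ne'] at hsum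

lemma succTerm_eq_rowSup_of_maximalAt {μ : ℝ} (hx : x ∈ WAC A μ C) (hC' : MaximalAt A C' μ)
    (i : ι) : succTerm A C' μ x i = rowSup A μ x i := by
  refine le_antisymm succTerm_le_rowSup (not_lt.1 fun hlt => ?_)
  have hpatch := hC' (C.patch C' i)
  rw [valAt_patch, valAt_eq_sum_succWeight,
    ← sum_filter_add_sum_filter_not univ ((C.perm⁻¹ * C'.perm).SameCycle i)] at hpatch
  exact (WithBot.add_lt_add_right (WithBot.sum_lt_bot fun j _ => hC'.succWeight_ne_bot j).ne'
    (sum_succWeight_lt_of_succTerm_lt hx hC' hlt)).not_ge hpatch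

lemma mem_WAC_of_maximalAt {μ : ℝ} (hx : x ∈ WAC A μ C) (hC' : MaximalAt A C' μ) :
    x ∈ WAC A μ C' :=
  mem_WAC_of_succTerm_eq_rowSup hx (succTerm_eq_rowSup_of_maximalAt hx hC')

end Exchange

section Bottom

variable {ι : Type} [Fintype ι] {A : Matrix ι ι RMax} {C C' : MultiCircuit ι}

/-- The length of an `ε`-maximal multi-circuit is the slope of `χ_A(μ)` as `μ → -∞`. -/
lemma card_eq_of_isLamMax_bot (hC : IsLamMax A C ⊥) (hC' : IsLamMax A C' ⊥) :
    C.verts.card = C'.verts.card := by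
  obtain ⟨μ₀, h₀⟩ := hC.2 rfl
  obtain ⟨μ₀', h₀'⟩ := hC'.2 rfl
  set μ := min μ₀ μ₀'
  have hμ : μ ≤ μ₀ ∧ μ ≤ μ₀' := ⟨min_le_left _ _, min_le_right _ _⟩
  have heq : ∀ ν ≤ μ, ValAt A C ν = ValAt A C' ν := fun ν hν =>
    le_antisymm (h₀' ν (by linarith) C) (h₀ ν (by linarith) C')
  obtain ⟨w, hw⟩ := (h₀ μ hμ.1).exists_valAt_eq
  obtain ⟨w', hw'⟩ := (h₀' μ hμ.2).exists_valAt_eq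
  have e₁ := heq μ le_rfl
  have e₂ := heq (μ - 1) (by linarith)
  rw [hw, hw', WithBot.coe_inj] at e₁ e₂
  have hcard : Fintype.card ι - C.verts.card = Fintype.card ι - C'.verts.card :=
    Nat.cast_injective (R := ℝ) (by linear_combination e₁ - e₂)
  have := card_le_univ C.verts
  have := card_le_univ C'.verts
  omega

end Bottom

lemma mem_WAC_of_isLamMax {ι : Type} [Fintype ι] [DecidableEq ι] {A : Matrix ι ι RMax}
    {l : RMax} {C C' : MultiCircuit ι} {x : Vec ι} (hA : StarAssumption A)
    (hC : IsLamMax A C l) (hC' : IsLamMax A C' l) (hx : x ∈ WAC A l C) : x ∈ WAC A l C' := by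
  induction l using WithBot.recBotCoe with
  | bot => rwa [← hA ⊥ C C' hC hC' (card_eq_of_isLamMax_bot hC hC')]
  | coe μ => exact mem_WAC_of_maximalAt hx (hC'.1 μ rfl)

section SetSum

variable {ι κ : Type} {U : κ → Set (Vec ι)} {x y : Vec ι}

lemma zeroV_mem_setSum : zeroV ι ∈ setSum U :=
  ⟨∅, fun _ => zeroV ι, by simp, rfl⟩

lemma sup_mem_setSum (hU : ∀ k, ∀ v ∈ U k, ∀ w ∈ U k, v ⊔ w ∈ U k) (hx : x ∈ setSum U)
    (hy : y ∈ setSum U) : x ⊔ y ∈ setSum U := by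
  classical
  obtain ⟨s, f, hf, rfl⟩ := hx
  obtain ⟨t, g, hg, rfl⟩ := hy
  have hcoord : ∀ (u : Finset κ) (F : κ → Vec ι), (fun i => u.sup fun k => F k i) = u.sup F :=
    fun u F => funext fun i => (Finset.sup_apply u F i).symm
  refine ⟨s ∪ t, (fun k => if k ∈ s then f k else ⊥) ⊔ (fun k => if k ∈ t then g k else ⊥),
    fun k hk => ?_, ?_⟩
  · by_cases hs : k ∈ s <;> by_cases ht : k ∈ t
    · simpa [hs, ht] using hU k _ (hf k hs) _ (hg k ht)
    · simpa [hs, ht] using hf k hs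
    · simpa [hs, ht] using hg k ht
    · simp_all
  · rw [hcoord, hcoord, hcoord, sup_sup, sup_ite, sup_ite]
    simp

lemma smulV_mem_setSum (c : RMax) (hU : ∀ k, ∀ v ∈ U k, smulV c v ∈ U k)
    (hx : x ∈ setSum U) : smulV c x ∈ setSum U := by
  obtain ⟨s, f, hf, rfl⟩ := hx
  exact ⟨s, fun k => smulV c (f k), fun k hk => hU k _ (hf k hk),
    funext fun i => RMax.add_finset_sup c s _⟩

end SetSum

section Limits

variable {f g : ℝ → RMax} {a b : RMax}

lemma rmaxTendsto_iff : RMaxTendsto f a ↔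
    (∀ M : ℝ, a < M → ∀ᶠ δ in 𝓝[>] 0, f δ < M) ∧
      (∀ M : ℝ, (M : RMax) < a → ∀ᶠ δ in 𝓝[>] 0, (M : RMax) < f δ) := by
  induction a using WithBot.recBotCoe with
  | bot => simp [RMaxTendsto]
  | coe a =>
    simp only [RMaxTendsto, WithBot.coe_ne_bot, WithBot.coe_inj, WithBot.coe_lt_coe,
      false_imp_iff, forall_eq', true_and]
    constructor
    · intro h
      refine ⟨fun M hM => ?_, fun M hM => ?_⟩
      · filter_upwards [h (M - a) (by linarith)] with δ ⟨y, hy, hya⟩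
        rw [hy, WithBot.coe_lt_coe]
        linarith [(abs_lt.1 hya).2]
      · filter_upwards [h (a - M) (by linarith)] with δ ⟨y, hy, hya⟩
        rw [hy, WithBot.coe_lt_coe]
        linarith [(abs_lt.1 hya).1]
    · rintro ⟨hlt, hgt⟩ ε hε
      filter_upwards [hlt (a + ε) (by linarith), hgt (a - ε) (by linarith)] with δ h₁ h₂
      obtain ⟨y, hy⟩ := WithBot.ne_bot_iff_exists.1 (ne_bot_of_gt h₂)
      rw [← hy, WithBot.coe_lt_coe] at h₁ h₂
      exact ⟨y, hy.symm, abs_lt.2 ⟨by linarith, by linarith⟩⟩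

lemma rmaxTendsto_const (a : RMax) : RMaxTendsto (fun _ => a) a :=
  rmaxTendsto_iff.2 ⟨fun _ h => .of_forall fun _ => h, fun _ h => .of_forall fun _ => h⟩

lemma RMaxTendsto.congr' (hf : RMaxTendsto f a) (hfg : f =ᶠ[𝓝[>] 0] g) : RMaxTendsto g a := by
  rw [rmaxTendsto_iff] at hf ⊢
  exact ⟨fun M hM => by filter_upwards [hf.1 M hM, hfg] with δ h₁ h₂ using h₂ ▸ h₁,
    fun M hM => by filter_upwards [hf.2 M hM, hfg] with δ h₁ h₂ using h₂ ▸ h₁⟩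

lemma RMaxTendsto.sup (hf : RMaxTendsto f a) (hg : RMaxTendsto g b) :
    RMaxTendsto (fun δ => f δ ⊔ g δ) (a ⊔ b) := by
  rw [rmaxTendsto_iff] at hf hg ⊢
  refine ⟨fun M hM => ?_, fun M hM => ?_⟩
  · filter_upwards [hf.1 M (lt_of_le_of_lt le_sup_left hM),
      hg.1 M (lt_of_le_of_lt le_sup_right hM)] with δ h₁ h₂ using sup_lt_iff.2 ⟨h₁, h₂⟩
  · rcases lt_sup_iff.1 hM with h | h
    · filter_upwards [hf.2 M h] with δ h₁ using lt_sup_of_lt_left h₁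
    · filter_upwards [hg.2 M h] with δ h₁ using lt_sup_of_lt_right h₁

lemma RMaxTendsto.const_add (c : RMax) (hf : RMaxTendsto f a) :
    RMaxTendsto (fun δ => c + f δ) (c + a) := by
  induction c using WithBot.recBotCoe with
  | bot => simpa using rmaxTendsto_const ⊥
  | coe c =>
    have hlt : ∀ (b : RMax) (M : ℝ), (c : RMax) + b < M ↔ b < ↑(M - c) := fun b M => by
      induction b using WithBot.recBotCoe <;> simp [← WithBot.coe_add, lt_sub_iff_add_lt']
    have hgt : ∀ (b : RMax) (M : ℝ), (M : RMax) < c + b ↔ ↑(M - c) < b := fun b M => by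
      induction b using WithBot.recBotCoe <;> simp [← WithBot.coe_add, sub_lt_iff_lt_add']
    rw [rmaxTendsto_iff] at hf ⊢
    simp only [hlt, hgt]
    exact ⟨fun M hM => hf.1 _ hM, fun M hM => hf.2 _ hM⟩

end Limits

section SetLim

variable {ι : Type} {S : ℝ → Set (Vec ι)} {x y : Vec ι}

lemma zeroV_mem_setLim (h : ∀ δ, 0 < δ → zeroV ι ∈ S δ) : zeroV ι ∈ setLim S :=
  ⟨fun _ => zeroV ι, h, fun _ => rmaxTendsto_const ⊥⟩

lemma sup_mem_setLim (hzero : ∀ δ, 0 < δ → zeroV ι ∈ S δ)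
    (hsup : ∀ᶠ δ in 𝓝[>] 0, ∀ u ∈ S δ, ∀ v ∈ S δ, u ⊔ v ∈ S δ)
    (hx : x ∈ setLim S) (hy : y ∈ setLim S) : x ⊔ y ∈ setLim S := by
  classical
  obtain ⟨g, hgS, hg⟩ := hx
  obtain ⟨h, hhS, hh⟩ := hy
  let closed δ := ∀ u ∈ S δ, ∀ v ∈ S δ, u ⊔ v ∈ S δ
  refine ⟨fun δ => if closed δ then g δ ⊔ h δ else zeroV ι, fun δ hδ => ?_, fun i => ?_⟩
  · dsimp only
    split_ifs with hδS
    · exact hδS _ (hgS δ hδ) _ (hhS δ hδ)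
    · exact hzero δ hδ
  · refine ((hg i).sup (hh i)).congr' ?_
    filter_upwards [hsup] with δ hδS
    simp only [closed, if_pos hδS]
    rfl

lemma smulV_mem_setLim (c : RMax) (hS : ∀ δ, 0 < δ → ∀ u ∈ S δ, smulV c u ∈ S δ)
    (hx : x ∈ setLim S) : smulV c x ∈ setLim S := by
  obtain ⟨g, hgS, hg⟩ := hx
  exact ⟨fun δ => smulV c (g δ), fun δ hδ => hS δ hδ _ (hgS δ hδ), fun i => (hg i).const_add c⟩

end SetLim

section PerturbSum

variable {ι : Type} [Fintype ι] [DecidableEq ι] {A : Matrix ι ι RMax} {L : Set RMax}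
  {x y : Vec ι}

lemma zeroV_mem_perturbSum : zeroV ι ∈ perturbSum A L := zeroV_mem_setSum

lemma sup_mem_perturbSum (hA : StarAssumption A) (hx : x ∈ perturbSum A L)
    (hy : y ∈ perturbSum A L) : x ⊔ y ∈ perturbSum A L :=
  sup_mem_setSum (fun _ _ ⟨C, hC, hv⟩ _ ⟨_, hC', hw⟩ =>
    ⟨C, hC, sup_mem_WAC hv (mem_WAC_of_isLamMax hA hC' hC hw)⟩) hx hy

lemma smulV_mem_perturbSum (c : RMax) (hx : x ∈ perturbSum A L) :
    smulV c x ∈ perturbSum A L :=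
  smulV_mem_setSum c (fun _ _ ⟨C, hC, hv⟩ => ⟨C, hC, smulV_mem_WAC c hv⟩) hx

end PerturbSum

theorem algEigenspace_is_subspace {n : ℕ} (A : Matrix (Fin n) (Fin n) RMax) (l : RMax) :
    zeroV (Fin n) ∈ algEigenspace A l ∧
    (∀ x y : Vec (Fin n), x ∈ algEigenspace A l → y ∈ algEigenspace A l →
      (fun i => max (x i) (y i)) ∈ algEigenspace A l) ∧
    (∀ c : RMax, ∀ x ∈ algEigenspace A l, smulV c x ∈ algEigenspace A l) := by
  simp only [algEigenspace, Set.mem_iInter₂]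
  refine ⟨fun ζ _ => zeroV_mem_setLim fun _ _ => zeroV_mem_perturbSum,
    fun x y hx hy ζ hζ => ?_,
    fun c x hx ζ hζ => smulV_mem_setLim c (fun _ _ _ => smulV_mem_perturbSum c) (hx ζ hζ)⟩
  refine sup_mem_setLim (fun _ _ => zeroV_mem_perturbSum) ?_ (hx ζ hζ) (hy ζ hζ)
  obtain ⟨-, δ', hδ', hstar⟩ := hζ
  filter_upwards [Ioo_mem_nhdsGT hδ'] with δ hδ
  exact fun u hu v hv => sup_mem_perturbSum (hstar δ hδ.1 hδ.2) hu hv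
end

section
/- If all diagonal entries of P ∈ ℝ_max^{n×n} are equal to 0 and the graph G(P) has no circuit of positive weight, then adj(P) = P*. -/
open Filter

/-!
Both sides are maxima of weights of paths from `i` to `j`. A permutation `τ` with `τ j = i`
contributes to `adj(P)_{ij}` the path `i → τ i → ⋯ → j` along its cycle through `j`, plus the
weights of its other cycles; these are `≤ 0`, so the term is at most the weight of an elementary
path, i.e. of an entry of some `P^{⊗k}` with `k < n`. Conversely an entry of `P^{⊗k}` is the
weight of a walk from `i` to `j`. Cutting out closed subwalks (each `≤ 0`) leaves an elementary
path. The cyclic permutation along that path sends `j` to `i`, and since the loops of `P` weigh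
`0`, its term in `adj(P)_{ij}` is exactly the weight of the path.
-/

open Finset Equiv Equiv.Perm

namespace List

variable {α : Type*}

lemma exists_cycle_of_not_nodup {l : List α} (hl : ¬l.Nodup) :
    ∃ p a q r, l = p ++ a :: (q ++ a :: r) ∧ (a :: q).Nodup := by
  induction l with
  | nil => simp at hl
  | cons x l ih =>
    by_cases hnd : l.Nodup
    · have hx : x ∈ l := by simpa [List.nodup_cons, hnd] using hl
      obtain ⟨q, r, rfl⟩ := List.append_of_mem hx
      refine ⟨[], x, q, r, rfl, ?_⟩
      simp only [List.nodup_append, List.nodup_cons] at hnd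
      simp only [List.nodup_cons]
      exact ⟨fun hq => hnd.2.2 x hq x (by simp) rfl, hnd.1⟩
    · obtain ⟨p, a, q, r, rfl, hq⟩ := ih hnd
      exact ⟨x :: p, a, q, r, rfl, hq⟩

lemma formPerm_cons_apply_of_getLast?_eq [DecidableEq α] {x j : α} {l : List α}
    (hj : (x :: l).getLast? = some j) : (x :: l).formPerm j = x := by
  obtain rfl : (x :: l).getLast (List.cons_ne_nil x l) = j := by
    simpa [List.getLast?_eq_some_getLast] using hj
  exact List.formPerm_apply_getLast x l

end List

section Walks

variable {ι R : Type*} [AddCommMonoid R] (P : Matrix ι ι R)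

def walkWeight : List ι → R
  | a :: b :: l => P a b + walkWeight (b :: l)
  | _ => 0

@[simp] lemma walkWeight_singleton (a : ι) : walkWeight P [a] = 0 := rfl

@[simp] lemma walkWeight_cons_cons (a b : ι) (l : List ι) :
    walkWeight P (a :: b :: l) = P a b + walkWeight P (b :: l) := rfl

lemma walkWeight_append_cons (p : List ι) (a : ι) (q : List ι) :
    walkWeight P (p ++ a :: q) = walkWeight P (p ++ [a]) + walkWeight P (a :: q) := by
  induction p with
  | nil => simp
  | cons x p ih => rcases p with _ | ⟨y, p⟩ <;> simp_all [add_assoc]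

lemma walkWeight_concat {l : List ι} {j : ι} (hj : l.getLast? = some j) (b : ι) :
    walkWeight P (l ++ [b]) = walkWeight P l + P j b := by
  obtain ⟨p, rfl⟩ := List.getLast?_eq_some_iff.1 hj
  rw [List.append_assoc, List.singleton_append, walkWeight_append_cons]
  simp

lemma sum_toFinset_erase_formPerm_eq_walkWeight [DecidableEq ι] {x j : ι} {l : List ι}
    (hl : (x :: l).Nodup) (hj : (x :: l).getLast? = some j) :
    ∑ r ∈ (x :: l).toFinset.erase j, P r ((x :: l).formPerm r) = walkWeight P (x :: l) := by
  induction l generalizing x with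
  | nil =>
    obtain rfl : x = j := by simpa using hj
    simp
  | cons y l ih =>
    have hx : x ∉ y :: l := (List.nodup_cons.1 hl).1
    have hjx : j ≠ x := by
      rintro rfl
      exact hx (List.mem_of_getLast? (by simpa using hj))
    have hstep : ∀ r ∈ (y :: l).toFinset.erase j,
        (x :: y :: l).formPerm r = (y :: l).formPerm r := by
      intro r hr
      obtain ⟨hrj, hr⟩ := Finset.mem_erase.1 hr
      have hmem : (y :: l).formPerm r ∈ y :: l :=
        List.formPerm_apply_mem_of_mem (List.mem_toFinset.1 hr)
      rw [List.formPerm_cons_cons, Perm.mul_apply, swap_apply_of_ne_of_ne]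
      · exact fun h => hx (h ▸ hmem)
      · rw [Ne, List.formPerm_eq_head_iff_eq_getLast]
        rintro rfl
        simp_all [List.getLast?_eq_some_getLast]
    rw [List.toFinset_cons, Finset.erase_insert_of_ne hjx.symm,
      Finset.sum_insert fun h => hx (List.mem_toFinset.1 (Finset.mem_of_mem_erase h)),
      Finset.sum_congr rfl fun r hr => by rw [hstep r hr], ih (List.nodup_cons.1 hl).2
      (by simpa using hj), List.formPerm_apply_head x y l hl, walkWeight_cons_cons]

lemma sum_erase_formPerm_eq_walkWeight [DecidableEq ι] [Fintype ι] (hdiag : ∀ i, P i i = 0)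
    {x j : ι} {l : List ι} (hl : (x :: l).Nodup) (hj : (x :: l).getLast? = some j) :
    ∑ r ∈ univ.erase j, P r ((x :: l).formPerm r) = walkWeight P (x :: l) := by
  rw [← sum_toFinset_erase_formPerm_eq_walkWeight P hl hj]
  refine (sum_subset (erase_subset_erase j (subset_univ _)) fun r hr hr' => ?_).symm
  have hrl : r ∉ x :: l := fun h =>
    hr' (mem_erase.2 ⟨(mem_erase.1 hr).1, List.mem_toFinset.2 h⟩)
  rw [List.formPerm_apply_of_notMem hrl, hdiag]

end Walks

section PowerWalks

variable {ι : Type} [Fintype ι] [DecidableEq ι] (P : Matrix ι ι RMax)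

lemma walkWeight_le_mpPow (i : ι) (l : List ι) {j : ι} (hj : (i :: l).getLast? = some j) :
    walkWeight P (i :: l) ≤ mpPow P l.length i j := by
  induction l generalizing i with
  | nil =>
    obtain rfl : i = j := by simpa using hj
    simp [mpPow, mpId]
  | cons b l ih =>
    calc walkWeight P (i :: b :: l) = P i b + walkWeight P (b :: l) := rfl
      _ ≤ P i b + mpPow P l.length b j := by grw [ih b (by simpa using hj)]
      _ ≤ mpPow P (b :: l).length i j :=
        Finset.le_sup (f := fun a => P i a + mpPow P l.length a j) (mem_univ b)

lemma exists_walk_mpPow_le_walkWeight (k : ℕ) (i j : ι) :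
    ∃ l : List ι, (i :: l).getLast? = some j ∧ mpPow P k i j ≤ walkWeight P (i :: l) := by
  induction k generalizing i with
  | zero =>
    by_cases hij : i = j
    · exact ⟨[], by simp [hij], by simp [mpPow, mpId, hij]⟩
    · exact ⟨[j], by simp, by simp [mpPow, mpId, hij]⟩
  | succ k ih =>
    obtain ⟨a, -, ha⟩ := exists_mem_eq_sup univ ⟨i, mem_univ i⟩
      fun a => P i a + mpPow P k a j
    obtain ⟨l, hl, hle⟩ := ih a
    refine ⟨a :: l, by simpa using hl, ?_⟩
    calc mpPow P (k + 1) i j = P i a + mpPow P k a j := ha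
      _ ≤ walkWeight P (i :: a :: l) := by grw [hle]; rfl

end PowerWalks

section NoPositiveCircuit

variable {ι : Type} [Fintype ι] [DecidableEq ι] (P : Matrix ι ι RMax)

def NoPositiveCircuit : Prop :=
  ∀ D : MultiCircuit ι, IsCircuit D → InGraph P D → mcWeight P D ≤ 0

variable {P}

lemma NoPositiveCircuit.sum_sameCycle_nonpos (hP : NoPositiveCircuit P) (τ : Perm ι) (x : ι) :
    ∑ r ∈ univ.filter (τ.SameCycle x), P r (τ r) ≤ 0 := by
  let C : MultiCircuit ι :=
    ⟨univ.filter (τ.SameCycle x), τ.cycleOf x,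
      fun y hy => cycleOf_apply_of_not_sameCycle (by simpa using hy)⟩
  have hweight : mcWeight P C = ∑ r ∈ univ.filter (τ.SameCycle x), P r (τ r) :=
    sum_congr rfl fun r hr => by rw [SameCycle.cycleOf_apply (by simpa using hr)]
  have hcycle : ∀ y, τ.SameCycle x y → (τ.cycleOf x).SameCycle x y := by
    rintro y ⟨k, rfl⟩
    exact ⟨k, cycleOf_zpow_apply_self τ x k⟩
  by_cases hG : InGraph P C
  · rw [← hweight]
    refine hP C ⟨⟨x, by simpa [C] using SameCycle.refl τ x⟩, fun a ha b hb => ?_⟩ hG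
    simp only [C, mem_filter, mem_univ, true_and] at ha hb
    exact (hcycle a ha).symm.trans (hcycle b hb)
  · obtain ⟨r, hr, hbot⟩ : ∃ r ∈ C.verts, P r (C.perm r) = ⊥ := by
      simpa [InGraph] using hG
    rw [← hweight, mcWeight, WithBot.sum_eq_bot_iff.2 ⟨r, hr, hbot⟩]
    exact bot_le

lemma NoPositiveCircuit.sum_nonpos_of_mapsTo (hP : NoPositiveCircuit P) (τ : Perm ι)
    (s : Finset ι) (hs : ∀ x ∈ s, τ x ∈ s) : ∑ r ∈ s, P r (τ r) ≤ 0 := by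
  induction s using Finset.strongInduction with
  | H s ih =>
  rcases s.eq_empty_or_nonempty with rfl | ⟨x, hx⟩
  · simp
  set o := univ.filter (τ.SameCycle x)
  have hpow : ∀ k : ℕ, (τ ^ k) x ∈ s := by
    intro k
    induction k with
    | zero => simpa using hx
    | succ k ihk => rw [pow_succ', Perm.mul_apply]; exact hs _ ihk
  have hos : o ⊆ s := fun y hy => by
    obtain ⟨k, rfl⟩ := (mem_filter.1 hy).2.exists_nat_pow_eq
    exact hpow k
  have hrest : ∀ y ∈ s \ o, τ y ∈ s \ o := fun y hy => by
    simp only [o, Finset.mem_sdiff, mem_filter, mem_univ, true_and, sameCycle_apply_right]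
      at hy ⊢
    exact ⟨hs y hy.1, hy.2⟩
  calc ∑ r ∈ s, P r (τ r) = ∑ r ∈ s \ o, P r (τ r) + ∑ r ∈ o, P r (τ r) :=
        (sum_sdiff hos).symm
    _ ≤ 0 + 0 := add_le_add
        (ih _ (sdiff_ssubset hos ⟨x, by simpa [o] using SameCycle.refl τ x⟩) hrest)
        (hP.sum_sameCycle_nonpos τ x)
    _ = 0 := add_zero 0

lemma NoPositiveCircuit.walkWeight_cycle_nonpos (hP : NoPositiveCircuit P) {x : ι}
    {l : List ι} (hl : (x :: l).Nodup) : walkWeight P (x :: l ++ [x]) ≤ 0 := by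
  obtain ⟨j, hj⟩ : ∃ j, (x :: l).getLast? = some j :=
    ⟨_, List.getLast?_eq_some_getLast (List.cons_ne_nil x l)⟩
  have hjmem : j ∈ (x :: l).toFinset := List.mem_toFinset.2 (List.mem_of_getLast? hj)
  have h := hP.sum_nonpos_of_mapsTo (x :: l).formPerm (x :: l).toFinset
    fun r hr => List.mem_toFinset.2 (List.formPerm_apply_mem_of_mem (List.mem_toFinset.1 hr))
  rwa [← add_sum_erase _ _ hjmem, sum_toFinset_erase_formPerm_eq_walkWeight P hl hj,
    List.formPerm_cons_apply_of_getLast?_eq hj, add_comm, ← walkWeight_concat P hj] at h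

lemma NoPositiveCircuit.exists_nodup_walkWeight_ge (hP : NoPositiveCircuit P) (l : List ι) :
    ∃ l' : List ι, l'.Nodup ∧ l'.head? = l.head? ∧ l'.getLast? = l.getLast? ∧
      walkWeight P l ≤ walkWeight P l' := by
  induction hlen : l.length using Nat.strong_induction_on generalizing l with
  | _ k ih =>
  by_cases hl : l.Nodup
  · exact ⟨l, hl, rfl, rfl, le_rfl⟩
  obtain ⟨p, a, q, r, rfl, hq⟩ := List.exists_cycle_of_not_nodup hl
  obtain ⟨l', hl', hhead, hlast, hle⟩ := ih _ (by simp [← hlen]) (p ++ a :: r) rfl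
  have hsplit : p ++ a :: (q ++ a :: r) = (p ++ a :: q) ++ a :: r := by simp
  refine ⟨l', hl', by rw [hhead]; cases p <;> rfl, ?_, ?_⟩
  · rw [hlast, hsplit, List.getLast?_append_of_ne_nil _ (List.cons_ne_nil a r),
      List.getLast?_append_of_ne_nil _ (List.cons_ne_nil a r)]
  calc walkWeight P (p ++ a :: (q ++ a :: r))
      = walkWeight P (p ++ [a]) + (walkWeight P (a :: q ++ [a]) + walkWeight P (a :: r)) := by
        rw [walkWeight_append_cons P p a, show a :: (q ++ a :: r) = (a :: q) ++ a :: r from rfl,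
          walkWeight_append_cons P (a :: q) a r]
    _ ≤ walkWeight P (p ++ [a]) + (0 + walkWeight P (a :: r)) := by
        grw [hP.walkWeight_cycle_nonpos hq]
    _ = walkWeight P (p ++ a :: r) := by rw [zero_add, walkWeight_append_cons P p a r]
    _ ≤ walkWeight P l' := hle

lemma exists_nodup_formPerm_eq_cycleOf (τ : Perm ι) (j : ι) :
    ∃ l : List ι, (τ j :: l).Nodup ∧ (τ j :: l).getLast? = some j ∧
      (τ j :: l).formPerm = τ.cycleOf j := by
  by_cases hj : τ j = j
  · exact ⟨[], by simp, by simp [hj], by simp [(cycleOf_eq_one_iff τ).2 hj]⟩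
  obtain ⟨l, hT⟩ : ∃ l, τ.toList j = j :: τ j :: l := by
    have hlen : 2 ≤ (τ.toList j).length := by
      rw [Perm.length_toList]; exact (two_le_card_support_cycleOf_iff).2 hj
    have h0 := getElem_toList τ j 0 (by omega)
    have h1 := getElem_toList τ j 1 (by omega)
    rcases hT : τ.toList j with _ | ⟨a, _ | ⟨b, l⟩⟩
    · simp [hT] at hlen
    · simp [hT] at hlen
    · simp only [hT, List.getElem_cons_zero, List.getElem_cons_succ] at h0 h1
      simp_all
  have hnd := τ.nodup_toList j
  have hrot : (τ.toList j).rotate 1 = τ j :: (l ++ [j]) := by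
    rw [hT, List.rotate_cons_succ, List.rotate_zero]; rfl
  refine ⟨l ++ [j], ?_, ?_, ?_⟩
  · rw [← hrot]; exact List.nodup_rotate.2 hnd
  · rw [← List.cons_append, List.getLast?_append_of_ne_nil _ (List.cons_ne_nil j [])]; rfl
  · rw [← hrot, List.formPerm_rotate _ hnd, formPerm_toList]

lemma NoPositiveCircuit.sum_erase_le_sum_erase_cycleOf (hdiag : ∀ i, P i i = 0)
    (hP : NoPositiveCircuit P) (τ : Perm ι) (j : ι) :
    ∑ r ∈ univ.erase j, P r (τ r) ≤ ∑ r ∈ univ.erase j, P r (τ.cycleOf j r) := by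
  have hrest : ∀ r ∈ (univ.erase j).filter (¬τ.SameCycle j ·),
      τ r ∈ (univ.erase j).filter (¬τ.SameCycle j ·) := fun r hr => by
    simp only [mem_filter, mem_erase, mem_univ, and_true, sameCycle_apply_right] at hr ⊢
    refine ⟨fun h => hr.2 ?_, hr.2⟩
    rw [← sameCycle_apply_right, h]
  calc ∑ r ∈ univ.erase j, P r (τ r)
      = ∑ r ∈ (univ.erase j).filter (τ.SameCycle j), P r (τ r) +
          ∑ r ∈ (univ.erase j).filter (¬τ.SameCycle j ·), P r (τ r) :=
        (sum_filter_add_sum_filter_not _ _ _).symm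
    _ ≤ ∑ r ∈ (univ.erase j).filter (τ.SameCycle j), P r (τ.cycleOf j r) + 0 := by
        refine add_le_add (sum_congr rfl fun r hr => ?_).le (hP.sum_nonpos_of_mapsTo τ _ hrest)
        rw [SameCycle.cycleOf_apply (mem_filter.1 hr).2]
    _ = ∑ r ∈ univ.erase j, P r (τ.cycleOf j r) := by
        rw [← sum_filter_add_sum_filter_not (univ.erase j) (τ.SameCycle j)]
        congr 1
        refine (sum_eq_zero fun r hr => ?_).symm
        rw [cycleOf_apply_of_not_sameCycle (mem_filter.1 hr).2, hdiag]

lemma NoPositiveCircuit.sum_erase_le_mpStar (hdiag : ∀ i, P i i = 0) (hP : NoPositiveCircuit P)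
    {τ : Perm ι} {i j : ι} (hτ : τ j = i) :
    ∑ r ∈ univ.erase j, P r (τ r) ≤ mpStar P i j := by
  subst hτ
  obtain ⟨l, hl, hj, hform⟩ := exists_nodup_formPerm_eq_cycleOf τ j
  calc ∑ r ∈ univ.erase j, P r (τ r)
      ≤ ∑ r ∈ univ.erase j, P r (τ.cycleOf j r) :=
        hP.sum_erase_le_sum_erase_cycleOf hdiag τ j
    _ = walkWeight P (τ j :: l) := by
        rw [← hform, sum_erase_formPerm_eq_walkWeight P hdiag hl hj]
    _ ≤ mpPow P l.length (τ j) j := walkWeight_le_mpPow P _ _ hj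
    _ ≤ mpStar P (τ j) j := Finset.le_sup (f := fun k => mpPow P k (τ j) j)
        (mem_range.2 (by simpa using hl.length_le_card))

lemma NoPositiveCircuit.exists_perm_mpPow_le_sum_erase (hdiag : ∀ i, P i i = 0)
    (hP : NoPositiveCircuit P) (k : ℕ) (i j : ι) :
    ∃ τ : Perm ι, τ j = i ∧ mpPow P k i j ≤ ∑ r ∈ univ.erase j, P r (τ r) := by
  obtain ⟨l, hj, hle⟩ := exists_walk_mpPow_le_walkWeight P k i j
  obtain ⟨l', hl', hhead, hlast, hwalk⟩ := hP.exists_nodup_walkWeight_ge (i :: l)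
  obtain ⟨l', rfl⟩ := List.head?_eq_some_iff.1 hhead
  rw [hj] at hlast
  exact ⟨_, List.formPerm_cons_apply_of_getLast?_eq hlast,
    hle.trans (hwalk.trans (sum_erase_formPerm_eq_walkWeight P hdiag hl' hlast).ge)⟩

end NoPositiveCircuit

section Adjugate

variable {n : ℕ}

lemma Fin.sum_erase_eq_sum_succAbove {M : Type*} [AddCommMonoid M] (f : Fin (n + 1) → M)
    (j : Fin (n + 1)) : ∑ r ∈ univ.erase j, f r = ∑ a, f (j.succAbove a) := by
  rw [Fin.univ_succAbove n j, erase_cons, sum_map]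
  rfl

lemma mpAdj_eq_sup (P : Matrix (Fin (n + 1)) (Fin (n + 1)) RMax) (i j : Fin (n + 1)) :
    mpAdj P i j = (univ.filter fun τ : Perm (Fin (n + 1)) => τ j = i).sup
      fun τ => ∑ r ∈ univ.erase j, P r (τ r) := by
  apply le_antisymm
  · refine Finset.sup_le fun π _ => ?_
    let τ : Perm (Fin (n + 1)) :=
      (finSuccEquiv' j).trans ((optionCongr π).trans (finSuccEquiv' i).symm)
    have hτj : τ j = i := by simp [τ, finSuccEquiv'_at]
    have hτ : ∀ a, τ (j.succAbove a) = i.succAbove (π a) := by simp [τ]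
    calc ∑ a, mpMinor P j i a (π a) = ∑ r ∈ univ.erase j, P r (τ r) := by
          simp [Fin.sum_erase_eq_sum_succAbove, mpMinor, hτ]
      _ ≤ _ := le_sup (f := fun τ : Perm (Fin (n + 1)) => ∑ r ∈ univ.erase j, P r (τ r))
          (mem_filter.2 ⟨mem_univ _, hτj⟩)
  · refine Finset.sup_le fun τ hτ => ?_
    have hτj : τ j = i := (mem_filter.1 hτ).2
    let π : Perm (Fin n) := (finSuccAboveEquiv j).trans
      ((τ.subtypeEquiv fun r => by simp [← hτj]).trans (finSuccAboveEquiv i).symm)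
    have hπ : ∀ a, i.succAbove (π a) = τ (j.succAbove a) := fun a =>
      congrArg Subtype.val ((finSuccAboveEquiv i).apply_symm_apply _)
    calc ∑ r ∈ univ.erase j, P r (τ r) = ∑ a, mpMinor P j i a (π a) := by
          simp [Fin.sum_erase_eq_sum_succAbove, mpMinor, hπ]
      _ ≤ mpAdj P i j := le_sup (f := fun π : Perm (Fin n) => ∑ a, mpMinor P j i a (π a))
          (mem_univ π)

end Adjugate

theorem adj_eq_star {n : ℕ} (P : Matrix (Fin (n + 1)) (Fin (n + 1)) RMax)
    (hdiag : ∀ i, P i i = (0 : RMax))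
    (hcirc : ∀ D : MultiCircuit (Fin (n + 1)), IsCircuit D → InGraph P D →
      mcWeight P D ≤ 0) :
    mpAdj P = mpStar P := by
  have hP : NoPositiveCircuit P := hcirc
  funext i j
  rw [mpAdj_eq_sup]
  apply le_antisymm
  · exact Finset.sup_le fun τ hτ => hP.sum_erase_le_mpStar hdiag (mem_filter.1 hτ).2
  · refine Finset.sup_le fun k _ => ?_
    obtain ⟨τ, hτ, hle⟩ := hP.exists_perm_mpPow_le_sum_erase hdiag k i j
    exact hle.trans (le_sup (f := fun τ : Perm (Fin (n + 1)) => ∑ r ∈ univ.erase j, P r (τ r))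
      (mem_filter.2 ⟨mem_univ _, hτ⟩))
end
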